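/- Let r, k, s be integers with k + r ≠ 0 and k + s ≠ 0, and let n be a non-negative integer. Then the integer 5·F_{k+r}·F_{k+s} divides L_{2k+r+s}^{n+1} − (−1)^{(k+s)(n+1)} L_{r−s}^{n+1} (divisibility in the ring of integers). -/

import Mathlib

/-!
Binet's formulas `√5 F_n = φⁿ - ψⁿ` and `L_n = φⁿ + ψⁿ` hold for all integers `n`. Since
`φψ = -1`, they give `L_{a+b} - (-1)^b L_{a-b} = (φᵃ - ψᵃ)(φᵇ - ψᵇ) = 5 F_a F_b`; with
`a = k + r`, `b = k + s` the theorem is then `x - y ∣ x^(n+1) - y^(n+1)`.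
-/

/-- Integer-indexed Fibonacci numbers: `fibZ n = F n`, with
`F (-n) = (-1)^(n+1) * F n`. -/
def fibZ (n : ℤ) : ℤ :=
  if 0 ≤ n then (Nat.fib n.toNat : ℤ) else (-1) ^ (n.natAbs + 1) * (Nat.fib n.natAbs : ℤ)

/-- Integer-indexed Lucas numbers: `lucZ n = L n = F (n+1) + F (n-1)`. -/
def lucZ (n : ℤ) : ℤ := fibZ (n + 1) + fibZ (n - 1)

open Real goldenRatio

theorem fibZ_natCast (m : ℕ) : fibZ m = Nat.fib m := by
  simp [fibZ]

theorem fibZ_neg_natCast (m : ℕ) : fibZ (-m) = (-1) ^ (m + 1) * Nat.fib m := by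
  simp [fibZ]

theorem coe_fibZ_eq (n : ℤ) : (fibZ n : ℝ) = (φ ^ n - ψ ^ n) / √5 := by
  obtain ⟨m, rfl | rfl⟩ := Int.eq_nat_or_neg n
  · simp [fibZ_natCast, coe_fib_eq]
  · have hφ : φ ^ (-(m : ℤ)) = (-1) ^ m * ψ ^ m := by
      rw [zpow_neg, zpow_natCast, ← inv_pow, inv_goldenRatio, neg_pow]
    have hψ : ψ ^ (-(m : ℤ)) = (-1) ^ m * φ ^ m := by
      rw [zpow_neg, zpow_natCast, ← inv_pow, inv_goldenConj, neg_pow]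
    rw [fibZ_neg_natCast, hφ, hψ]
    push_cast
    rw [coe_fib_eq]
    ring

theorem coe_lucZ_eq (n : ℤ) : (lucZ n : ℝ) = φ ^ n + ψ ^ n := by
  have h5 : √5 ≠ 0 := by positivity
  have hφ : φ + φ⁻¹ = √5 := by
    rw [inv_goldenRatio, ← sub_eq_add_neg, goldenRatio_sub_goldenConj]
  have hψ : ψ + ψ⁻¹ = -√5 := by
    rw [inv_goldenConj, ← sub_eq_add_neg, ← goldenRatio_sub_goldenConj, neg_sub]
  rw [lucZ, Int.cast_add, coe_fibZ_eq, coe_fibZ_eq, zpow_add₀ goldenRatio_ne_zero,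
    zpow_add₀ goldenConj_ne_zero, zpow_sub₀ goldenRatio_ne_zero, zpow_sub₀ goldenConj_ne_zero,
    zpow_one, zpow_one, ← add_div, div_eq_iff h5]
  linear_combination φ ^ n * hφ - ψ ^ n * hψ

theorem lucZ_add_sub_negOnePow_mul_lucZ_sub (a b : ℤ) :
    lucZ (a + b) - b.negOnePow * lucZ (a - b) = 5 * fibZ a * fibZ b := by
  have h5 : √5 ^ 2 = 5 := sq_sqrt (by norm_num)
  have hsign : ((b.negOnePow : ℤ) : ℝ) = φ ^ b * ψ ^ b := by
    rw [Int.cast_negOnePow, ← mul_zpow, goldenRatio_mul_goldenConj]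
  apply Int.cast_injective (α := ℝ)
  push_cast
  rw [hsign, coe_lucZ_eq, coe_lucZ_eq, coe_fibZ_eq, coe_fibZ_eq, zpow_add₀ goldenRatio_ne_zero,
    zpow_add₀ goldenConj_ne_zero, zpow_sub₀ goldenRatio_ne_zero, zpow_sub₀ goldenConj_ne_zero]
  have hφ : φ ^ b ≠ 0 := zpow_ne_zero _ goldenRatio_ne_zero
  have hψ : ψ ^ b ≠ 0 := zpow_ne_zero _ goldenConj_ne_zero
  field_simp
  rw [h5]
  ring

theorem cor_lucas_power_dvd_general (r k s : ℤ) (n : ℕ) :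
    (5 * fibZ (k + r) * fibZ (k + s))
      ∣ lucZ (2 * k + r + s) ^ (n + 1)
        - (((k + s) * ((n : ℤ) + 1)).negOnePow : ℤ) * lucZ (r - s) ^ (n + 1) := by
  have hsign : (((k + s) * ((n : ℤ) + 1)).negOnePow : ℤ)
      = ((k + s).negOnePow : ℤ) ^ (n + 1) := by
    rw [Int.negOnePow_def, Int.negOnePow_def, zpow_mul]
    norm_cast
  have key := lucZ_add_sub_negOnePow_mul_lucZ_sub (k + r) (k + s)
  rw [show k + r + (k + s) = 2 * k + r + s by ring, show k + r - (k + s) = r - s by ring] at key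
  rw [hsign, ← mul_pow, ← key]
  exact sub_dvd_pow_sub_pow _ _ _

theorem cor_lucas_power_dvd (r k s : ℤ) (hkr : k + r ≠ 0) (hks : k + s ≠ 0) (n : ℕ) :
    (5 * fibZ (k + r) * fibZ (k + s))
      ∣ lucZ (2 * k + r + s) ^ (n + 1)
        - (((k + s) * ((n : ℤ) + 1)).negOnePow : ℤ) * lucZ (r - s) ^ (n + 1) :=
  cor_lucas_power_dvd_general r k s n
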